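/- arXiv:1805.06707 — 5 statements merged into one kernel-verified Lean document; each statement's English description precedes it below -/
import Mathlib

section
/- Let A be an n×n real matrix partitioned as A = [[A11, A12],[A21, A22]] where A11 is m×m, and suppose rank(A11) = rank(A). Then there exists an m×(n−m) real matrix Q such that A12 = A11·Q and A22 = A21·Q. -/
open Matrix

theorem stmt_0 (n m : ℕ)
    (A11 : Matrix (Fin m) (Fin m) ℝ) (A12 : Matrix (Fin m) (Fin (n - m)) ℝ)
    (A21 : Matrix (Fin (n - m)) (Fin m) ℝ) (A22 : Matrix (Fin (n - m)) (Fin (n - m)) ℝ)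
    (hrank : (Matrix.fromBlocks A11 A12 A21 A22).rank = A11.rank) :
    ∃ Q : Matrix (Fin m) (Fin (n - m)) ℝ, A12 = A11 * Q ∧ A22 = A21 * Q := by
  set C : Matrix (Fin m ⊕ Fin (n - m)) (Fin m) ℝ := fromRows A11 A21 with hC
  set D : Matrix (Fin m ⊕ Fin (n - m)) (Fin (n - m)) ℝ := fromRows A12 A22 with hD
  set B : Matrix (Fin m ⊕ Fin (n - m)) (Fin m ⊕ Fin (n - m)) ℝ := fromBlocks A11 A12 A21 A22 with hB
  have hBC : B = fromCols C D := by
    rw [hB, hC, hD, fromCols_fromRows_eq_fromBlocks]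
  -- range of C ≤ range of B
  have hle : LinearMap.range C.mulVecLin ≤ LinearMap.range B.mulVecLin := by
    rintro _ ⟨x, rfl⟩
    refine ⟨Sum.elim x 0, ?_⟩
    simp [hBC, mulVecLin_apply, fromCols_mulVec_sumElim]
  -- rank A11 ≤ rank C
  have h1 : A11.rank ≤ C.rank := by
    have hcomp : A11.mulVecLin = (LinearMap.funLeft ℝ ℝ (Sum.inl : Fin m → Fin m ⊕ Fin (n - m))).comp
        C.mulVecLin := by
      ext x i
      simp [mulVecLin_apply, hC, fromRows_mulVec]
    rw [Matrix.rank, Matrix.rank, hcomp, LinearMap.range_comp]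
    exact Submodule.finrank_map_le _ _
  -- rank C ≤ rank B
  have h2 : C.rank ≤ B.rank := Submodule.finrank_mono hle
  have heq : LinearMap.range C.mulVecLin = LinearMap.range B.mulVecLin := by
    apply Submodule.eq_of_le_of_finrank_le hle
    calc Module.finrank ℝ (LinearMap.range B.mulVecLin) = B.rank := rfl
      _ = A11.rank := hrank
      _ ≤ C.rank := h1
  -- every column of D is in the range of C
  have hcol : ∀ j : Fin (n - m), ∃ x : Fin m → ℝ, C *ᵥ x = fun i => D i j := by
    intro j
    have : (fun i => D i j) ∈ LinearMap.range B.mulVecLin := by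
      refine ⟨Sum.elim 0 (Pi.single j 1), ?_⟩
      funext i
      simp [hBC, mulVecLin_apply, fromCols_mulVec_sumElim, mulVec_single]
    rw [← heq] at this
    obtain ⟨x, hx⟩ := this
    exact ⟨x, hx⟩
  choose x hx using hcol
  refine ⟨Matrix.of fun i j => x j i, ?_, ?_⟩
  · ext i j
    have := congrFun (hx j) (Sum.inl i)
    simpa [hC, hD, fromRows_mulVec, mulVec, dotProduct, mul_apply] using this.symm
  · ext i j
    have := congrFun (hx j) (Sum.inr i)
    simpa [hC, hD, fromRows_mulVec, mulVec, dotProduct, mul_apply] using this.symm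
end

section
/- Let A be an n×n nonnegative real matrix partitioned as [[A11, A12],[A21, A22]] with A11 of size m×m satisfying rank(A11) = rank(A), and let r = rank(A21). If n > m + mr, then there exists a nonnegative matrix à of order m + mr such that charpoly(A) = x^{n−m−mr}·charpoly(Ã); i.e., à has the same nonzero spectrum as A (with multiplicity). -/
open Matrix Polynomial

section Aux

variable {R : Type*} [CommRing R]

private lemma charmatrix_eq_smul {p : Type*} [Fintype p] [DecidableEq p] (M : Matrix p p R) :
    charmatrix M = (X : R[X]) • (1 : Matrix p p R[X]) - M.map (C : R →+* R[X]) := by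
  rw [charmatrix, smul_one_eq_diagonal]
  rfl

private lemma charpoly_mul_comm_aux {p q : Type*} [Fintype p] [Fintype q]
    [DecidableEq p] [DecidableEq q] (U : Matrix p q R) (V : Matrix q p R) :
    (U * V).charpoly * X ^ (Fintype.card q) = (V * U).charpoly * X ^ (Fintype.card p) := by
  classical
  set Ub : Matrix p q R[X] := U.map (C : R →+* R[X]) with hUb
  set Vb : Matrix q p R[X] := V.map (C : R →+* R[X]) with hVb
  set E : Matrix (p ⊕ q) (p ⊕ q) R[X] :=
    fromBlocks ((X : R[X]) • 1) Ub ((X : R[X]) • Vb) ((X : R[X]) • 1) with hE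
  have e1 : fromBlocks (1 : Matrix p p R[X]) 0 Vb 1 *
      fromBlocks ((X : R[X]) • 1) Ub 0 ((X : R[X]) • 1 - Vb * Ub) = E := by
    rw [fromBlocks_multiply]
    refine Matrix.fromBlocks_inj.mpr ⟨?_, ?_, ?_, ?_⟩
    · rw [Matrix.one_mul, Matrix.zero_mul, add_zero]
    · rw [Matrix.one_mul, Matrix.zero_mul, add_zero]
    · rw [Matrix.mul_smul, Matrix.mul_one, Matrix.one_mul, add_zero]
    · rw [Matrix.one_mul, add_sub_cancel]
  have e2 : fromBlocks ((X : R[X]) • 1 - Ub * Vb) Ub 0 ((X : R[X]) • 1) *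
      fromBlocks (1 : Matrix p p R[X]) 0 Vb 1 = E := by
    rw [fromBlocks_multiply]
    refine Matrix.fromBlocks_inj.mpr ⟨?_, ?_, ?_, ?_⟩
    · rw [Matrix.mul_one]; abel
    · rw [Matrix.mul_zero, Matrix.mul_one, zero_add]
    · rw [Matrix.zero_mul, Matrix.smul_mul, Matrix.one_mul, zero_add]
    · rw [Matrix.zero_mul, Matrix.smul_mul, Matrix.mul_one, zero_add]
  have hchar_q : (X : R[X]) • (1 : Matrix q q R[X]) - Vb * Ub = charmatrix (V * U) := by
    rw [charmatrix_eq_smul, Matrix.map_mul]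
  have hchar_p : (X : R[X]) • (1 : Matrix p p R[X]) - Ub * Vb = charmatrix (U * V) := by
    rw [charmatrix_eq_smul, Matrix.map_mul]
  have hdet1 : E.det = X ^ (Fintype.card p) * (V * U).charpoly := by
    rw [← e1, det_mul, det_fromBlocks_zero₁₂, det_one, det_one, one_mul, one_mul,
      det_fromBlocks_zero₂₁, det_smul, det_one, mul_one, hchar_q]
    rfl
  have hdet2 : E.det = (U * V).charpoly * X ^ (Fintype.card q) := by
    rw [← e2, det_mul, det_fromBlocks_zero₁₂, det_one, det_one, one_mul, mul_one,
      det_fromBlocks_zero₂₁, det_smul, det_one, mul_one, hchar_p]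
    rfl
  rw [← hdet2, hdet1, mul_comm]

end Aux

private lemma sum_eq_support_sum {ι : Type*} [Fintype ι] {M : Type*} [AddCommMonoid M]
    (f : ι → M) (p : ι → Prop) [DecidablePred p] (h0 : ∀ i, ¬ p i → f i = 0) :
    ∑ i, f i = ∑ i : {i : ι // p i}, f i.1 := by
  classical
  rw [← Finset.sum_filter_add_sum_filter_not Finset.univ p]
  rw [Finset.sum_eq_zero (fun i hi => h0 i (Finset.mem_filter.mp hi).2), add_zero]
  exact Finset.sum_subtype (Finset.univ.filter p) (fun x => by simp) f

private lemma caratheodory_cone {ι : Type*} [Fintype ι] {M : Type*} [AddCommGroup M]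
    [Module ℝ M] (v : ι → M) :
    ∀ (c : ι → ℝ), (∀ i, 0 ≤ c i) →
    ∃ c' : ι → ℝ, (∀ i, 0 ≤ c' i) ∧ (∑ i, c' i • v i = ∑ i, c i • v i) ∧
      LinearIndependent ℝ (fun i : {i : ι // c' i ≠ 0} => v i.1) := by
  classical
  suffices H : ∀ (k : ℕ) (c : ι → ℝ), (∀ i, 0 ≤ c i) →
      (Finset.univ.filter fun i => c i ≠ 0).card = k →
      ∃ c' : ι → ℝ, (∀ i, 0 ≤ c' i) ∧ (∑ i, c' i • v i = ∑ i, c i • v i) ∧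
        LinearIndependent ℝ (fun i : {i : ι // c' i ≠ 0} => v i.1) by
    exact fun c hc => H _ c hc rfl
  intro k
  induction k using Nat.strong_induction_on with
  | _ k ih =>
    intro c hc hk
    by_cases hli : LinearIndependent ℝ (fun i : {i : ι // c i ≠ 0} => v i.1)
    · exact ⟨c, hc, rfl, hli⟩
    obtain ⟨g, hgsum, j, hgj⟩ := Fintype.not_linearIndependent_iff.mp hli
    set G : ι → ℝ := fun i => if h : c i ≠ 0 then g ⟨i, h⟩ else 0 with hG
    have hGsum : ∑ i, G i • v i = 0 := by
      rw [sum_eq_support_sum (fun i => G i • v i) (fun i => c i ≠ 0)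
        (fun i hi => by simp only [hG]; rw [dif_neg hi, zero_smul])]
      rw [← hgsum]
      exact Finset.sum_congr rfl fun i _ => by simp only [hG]; rw [dif_pos i.2]
    have hGzero : ∀ i, c i = 0 → G i = 0 := fun i hi => by simp [hG, hi]
    have hGne : G j.1 ≠ 0 := by simp only [hG]; rw [dif_pos j.2]; exact hgj
    obtain ⟨H, hHsum, hHpos, hHzero⟩ :
        ∃ H : ι → ℝ, (∑ i, H i • v i = 0) ∧ (∃ i, 0 < H i) ∧ (∀ i, c i = 0 → H i = 0) := by
      rcases hGne.lt_or_gt with h | h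
      · refine ⟨-G, ?_, ⟨j.1, by simpa using h⟩, fun i hi => by simp [hGzero i hi]⟩
        simp only [Pi.neg_apply, neg_smul, Finset.sum_neg_distrib, hGsum, neg_zero]
      · exact ⟨G, hGsum, ⟨j.1, h⟩, hGzero⟩
    have hPne : (Finset.univ.filter fun i => 0 < H i).Nonempty :=
      ⟨hHpos.choose, by simp [hHpos.choose_spec]⟩
    obtain ⟨i₀, hi₀P, hi₀min⟩ :=
      (Finset.univ.filter fun i => 0 < H i).exists_min_image (fun i => c i / H i) hPne
    have hHi₀ : 0 < H i₀ := (Finset.mem_filter.mp hi₀P).2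
    set t : ℝ := c i₀ / H i₀ with ht
    have ht0 : 0 ≤ t := div_nonneg (hc i₀) hHi₀.le
    set c2 : ι → ℝ := fun i => c i - t * H i with hc2
    have hc20 : ∀ i, 0 ≤ c2 i := by
      intro i
      by_cases hi : 0 < H i
      · have hle : t ≤ c i / H i := hi₀min i (by simp [hi])
        have := (le_div_iff₀ hi).mp hle
        simp only [hc2]; linarith
      · have hHle : H i ≤ 0 := not_lt.mp hi
        have h1 : 0 ≤ -(t * H i) := by nlinarith
        have h2 := hc i
        simp only [hc2]; linarith
    have hc2sum : ∑ i, c2 i • v i = ∑ i, c i • v i := by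
      have : ∀ i, c2 i • v i = c i • v i - t • (H i • v i) := by
        intro i
        simp only [hc2, sub_smul, mul_smul]
      rw [Finset.sum_congr rfl (fun i _ => this i), Finset.sum_sub_distrib,
        ← Finset.smul_sum, hHsum, smul_zero, sub_zero]
    have hc2i₀ : c2 i₀ = 0 := by
      simp only [hc2, ht]
      field_simp
      ring
    have hsubset : (Finset.univ.filter fun i => c2 i ≠ 0) ⊂
        (Finset.univ.filter fun i => c i ≠ 0) := by
      refine Finset.ssubset_iff_of_subset ?_ |>.mpr ?_
      · intro i hi
        simp only [Finset.mem_filter, Finset.mem_univ, true_and] at hi ⊢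
        intro hci
        exact hi (by simp [hc2, hci, hHzero i hci])
      · refine ⟨i₀, ?_, ?_⟩
        · simp only [Finset.mem_filter, Finset.mem_univ, true_and]
          intro hci₀
          exact hHi₀.ne' (hHzero i₀ hci₀)
        · simp [hc2i₀]
    obtain ⟨c', h1, h2, h3⟩ := ih _ (hk ▸ Finset.card_lt_card hsubset) c2 hc20 rfl
    exact ⟨c', h1, h2.trans hc2sum, h3⟩

private lemma sum_embed {κ ι' : Type*} [Fintype κ] [Fintype ι'] [DecidableEq ι']
    (ψ : κ ↪ ι') {M : Type*} [AddCommMonoid M] (F : κ → M) :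
    (∑ α : ι', if h : ∃ l, ψ l = α then F h.choose else 0) = ∑ l, F l := by
  classical
  rw [← Finset.sum_subset (Finset.subset_univ (Finset.univ.image ψ))
    (fun α _ hα => by
      rw [dif_neg]
      rintro ⟨l, rfl⟩
      exact hα (Finset.mem_image.mpr ⟨l, Finset.mem_univ l, rfl⟩))]
  rw [Finset.sum_image (fun a _ b _ h => ψ.injective h)]
  refine Finset.sum_congr rfl fun l _ => ?_
  have hex : ∃ l', ψ l' = ψ l := ⟨l, rfl⟩
  rw [dif_pos hex]
  congr 1
  exact ψ.injective hex.choose_spec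

private lemma exists_D {n m : ℕ}
    (A11 : Matrix (Fin m) (Fin m) ℝ) (A12 : Matrix (Fin m) (Fin (n - m)) ℝ)
    (A21 : Matrix (Fin (n - m)) (Fin m) ℝ) (A22 : Matrix (Fin (n - m)) (Fin (n - m)) ℝ)
    (hrank : (Matrix.fromBlocks A11 A12 A21 A22).rank = A11.rank) :
    ∃ D : Matrix (Fin m) (Fin (n - m)) ℝ, A11 * D = A12 ∧ A21 * D = A22 := by
  classical
  set A' : Matrix (Fin m ⊕ Fin (n - m)) (Fin m ⊕ Fin (n - m)) ℝ :=
    Matrix.fromBlocks A11 A12 A21 A22 with hA'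
  set T : Matrix (Fin m ⊕ Fin (n - m)) (Fin m) ℝ := Matrix.fromRows A11 A21 with hT
  have hTmul : ∀ v : Fin m → ℝ, A'.mulVec (Sum.elim v 0) = T.mulVec v := by
    intro v
    funext i
    cases i with
    | inl i =>
      simp [hA', hT, Matrix.mulVec, dotProduct, Fintype.sum_sum_type]
    | inr i =>
      simp [hA', hT, Matrix.mulVec, dotProduct, Fintype.sum_sum_type]
  have hle : LinearMap.range T.mulVecLin ≤ LinearMap.range A'.mulVecLin := by
    rintro x ⟨v, rfl⟩
    exact ⟨Sum.elim v 0, by rw [Matrix.mulVecLin_apply, Matrix.mulVecLin_apply, hTmul]⟩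
  have hrank1 : A11.rank ≤ T.rank := by
    have hcomp : A11.mulVecLin =
        (LinearMap.funLeft ℝ ℝ (Sum.inl : Fin m → Fin m ⊕ Fin (n - m))).comp T.mulVecLin := by
      apply LinearMap.ext
      intro v
      funext i
      simp [hT, Matrix.mulVecLin_apply, LinearMap.funLeft, Matrix.mulVec, dotProduct]
    have : LinearMap.range A11.mulVecLin =
        Submodule.map (LinearMap.funLeft ℝ ℝ (Sum.inl : Fin m → Fin m ⊕ Fin (n - m)))
          (LinearMap.range T.mulVecLin) := by
      rw [hcomp, LinearMap.range_comp]
    unfold Matrix.rank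
    rw [this]
    exact Submodule.finrank_map_le _ _
  have hrank2 : T.rank ≤ A'.rank := by
    unfold Matrix.rank
    exact Submodule.finrank_mono hle
  have hreq : LinearMap.range T.mulVecLin = LinearMap.range A'.mulVecLin := by
    apply Submodule.eq_of_le_of_finrank_eq hle
    have h1 : T.rank = A'.rank := le_antisymm hrank2 (hrank ▸ hrank1)
    exact h1
  have hcol : ∀ j : Fin (n - m), ∃ d : Fin m → ℝ,
      T.mulVec d = fun i => A' i (Sum.inr j) := by
    intro j
    have : (fun i => A' i (Sum.inr j)) ∈ LinearMap.range A'.mulVecLin := by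
      refine ⟨Pi.single (Sum.inr j) 1, ?_⟩
      rw [Matrix.mulVecLin_apply, Matrix.mulVec_single]
      funext i
      simp
    rw [← hreq] at this
    obtain ⟨d, hd⟩ := this
    exact ⟨d, hd⟩
  choose Dfun hDfun using hcol
  refine ⟨Matrix.of fun k j => Dfun j k, ?_, ?_⟩
  · ext i j
    have := congrFun (hDfun j) (Sum.inl i)
    simp only [hT, Matrix.mulVec, dotProduct, Matrix.of_apply,
      Sum.elim_inl] at this
    simpa [Matrix.mul_apply, hA'] using this
  · ext i j
    have := congrFun (hDfun j) (Sum.inr i)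
    simp only [hT, Matrix.mulVec, dotProduct, Matrix.of_apply,
      Sum.elim_inr] at this
    simpa [Matrix.mul_apply, hA'] using this

set_option maxHeartbeats 1000000 in
theorem stmt_6 (n m r : ℕ)
    (A11 : Matrix (Fin m) (Fin m) ℝ) (A12 : Matrix (Fin m) (Fin (n - m)) ℝ)
    (A21 : Matrix (Fin (n - m)) (Fin m) ℝ) (A22 : Matrix (Fin (n - m)) (Fin (n - m)) ℝ)
    (hnonneg : ∀ i j, 0 ≤ Matrix.fromBlocks A11 A12 A21 A22 i j)
    (hrank : (Matrix.fromBlocks A11 A12 A21 A22).rank = A11.rank)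
    (hr : A21.rank = r) (hn : n > m + m * r) :
    ∃ Atil : Matrix (Fin (m + m * r)) (Fin (m + m * r)) ℝ,
      (∀ i j, 0 ≤ Atil i j) ∧
      (Matrix.fromBlocks A11 A12 A21 A22).charpoly =
        X ^ (n - (m + m * r)) * Atil.charpoly := by
  classical
  obtain ⟨D, hA12D, hA22D⟩ := exists_D A11 A12 A21 A22 hrank
  -- nonnegativity of the blocks
  have hA11 : ∀ i j, 0 ≤ A11 i j := fun i j => by simpa using hnonneg (Sum.inl i) (Sum.inl j)
  have hA12 : ∀ i j, 0 ≤ A12 i j := fun i j => by simpa using hnonneg (Sum.inl i) (Sum.inr j)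
  have hA21n : ∀ i j, 0 ≤ A21 i j := fun i j => by simpa using hnonneg (Sum.inr i) (Sum.inl j)
  have hA22n : ∀ i j, 0 ≤ A22 i j := fun i j => by simpa using hnonneg (Sum.inr i) (Sum.inr j)
  -- the row space of A21
  set Vsp : Submodule ℝ (Fin m → ℝ) := Submodule.span ℝ (Set.range A21) with hVsp
  have hVfin : Module.finrank ℝ Vsp = r := by
    rw [← hr, Matrix.rank_eq_finrank_span_row]
    rfl
  -- the rank-one pieces of D * A21
  set v : Fin (n - m) → Matrix (Fin m) (Fin m) ℝ :=
    fun l => Matrix.of fun i j => D i l * A21 l j with hv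
  obtain ⟨c, hc0, hcsum, hcli⟩ := caratheodory_cone v (fun _ => (1 : ℝ)) (fun _ => zero_le_one)
  -- the matrices with rows in Vsp form an (m*r)-dimensional space
  set Φ : (Fin m → Vsp) →ₗ[ℝ] Matrix (Fin m) (Fin m) ℝ :=
    { toFun := fun f => Matrix.of fun i j => (f i : Fin m → ℝ) j
      map_add' := fun f g => by ext i j; simp
      map_smul' := fun a f => by ext i j; simp } with hΦ
  have hΦinj : Function.Injective Φ := by
    intro f g hfg
    funext i
    apply Subtype.ext
    funext j
    exact Matrix.ext_iff.mpr hfg i j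
  have hrangeΦ : Module.finrank ℝ (LinearMap.range Φ) = m * r := by
    rw [LinearMap.finrank_range_of_inj hΦinj, Module.finrank_pi_fintype ℝ]
    simp [hVfin, Finset.sum_const, Fintype.card_fin, mul_comm]
  have hmem : ∀ l, v l ∈ LinearMap.range Φ := by
    intro l
    refine ⟨fun i => ⟨D i l • A21 l, Submodule.smul_mem _ _ (Submodule.subset_span ⟨l, rfl⟩)⟩, ?_⟩
    ext i j
    simp [hΦ, hv]
  have hcard : Fintype.card {l // c l ≠ 0} ≤ m * r := by
    have hres : LinearIndependent ℝ
        (fun l : {l // c l ≠ 0} => (⟨v l.1, hmem l.1⟩ : LinearMap.range Φ)) := by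
      apply LinearIndependent.of_comp (LinearMap.range Φ).subtype
      exact hcli
    exact hrangeΦ ▸ hres.fintype_card_le_finrank
  obtain ⟨ψ⟩ : Nonempty ({l // c l ≠ 0} ↪ Fin (m * r)) :=
    Function.Embedding.nonempty_of_card_le (by simpa using hcard)
  -- the compressed matrices
  set Wm : Matrix (Fin (m * r)) (Fin m) ℝ :=
    Matrix.of fun α j => if h : ∃ l, ψ l = α then A21 h.choose.1 j else 0 with hWm
  set Ym : Matrix (Fin m) (Fin (m * r)) ℝ :=
    Matrix.of fun i α => if h : ∃ l, ψ l = α then c h.choose.1 * D i h.choose.1 else 0 with hYm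
  have hYW : Ym * Wm = D * A21 := by
    ext i j
    rw [Matrix.mul_apply]
    have hterm : ∀ α, Ym i α * Wm α j =
        (if h : ∃ l, ψ l = α then
          (fun l : {l // c l ≠ 0} => c l.1 * (D i l.1 * A21 l.1 j)) h.choose else 0) := by
      intro α
      by_cases h : ∃ l, ψ l = α
      · simp only [hYm, hWm, Matrix.of_apply, dif_pos h]; ring
      · simp only [hYm, hWm, Matrix.of_apply, dif_neg h, zero_mul]
    rw [Finset.sum_congr rfl (fun α _ => hterm α),
      sum_embed ψ (fun l : {l // c l ≠ 0} => c l.1 * (D i l.1 * A21 l.1 j))]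
    have h1 : ∑ l : {l // c l ≠ 0}, c l.1 * (D i l.1 * A21 l.1 j)
        = ∑ l, c l * (D i l * A21 l j) :=
      (sum_eq_support_sum (fun l => c l * (D i l * A21 l j)) (fun l => c l ≠ 0)
        (fun l hl => by
          show c l * (D i l * A21 l j) = 0
          rw [not_not.mp hl, zero_mul])).symm
    rw [h1]
    have h2 := Matrix.ext_iff.mpr hcsum i j
    simp only [Matrix.sum_apply, Matrix.smul_apply, hv, Matrix.of_apply, smul_eq_mul,
      one_mul] at h2
    rw [h2, Matrix.mul_apply]
  have hWnn : ∀ α j, 0 ≤ Wm α j := by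
    intro α j
    by_cases h : ∃ l, ψ l = α
    · simp only [hWm, Matrix.of_apply, dif_pos h]; exact hA21n _ _
    · simp only [hWm, Matrix.of_apply, dif_neg h]; exact le_refl 0
  have hA11Y : ∀ i α, 0 ≤ (A11 * Ym) i α := by
    intro i α
    rw [Matrix.mul_apply]
    by_cases h : ∃ l, ψ l = α
    · have hterm : ∀ k, A11 i k * Ym k α = c h.choose.1 * (A11 i k * D k h.choose.1) := by
        intro k
        simp only [hYm, Matrix.of_apply, dif_pos h]; ring
      rw [Finset.sum_congr rfl fun k _ => hterm k, ← Finset.mul_sum]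
      have h2 : ∑ k, A11 i k * D k h.choose.1 = (A11 * D) i h.choose.1 :=
        (Matrix.mul_apply).symm
      rw [h2, hA12D]
      exact mul_nonneg (hc0 _) (hA12 _ _)
    · rw [Finset.sum_eq_zero fun k _ => by
        simp only [hYm, Matrix.of_apply]; rw [dif_neg h, mul_zero]]
  have hWY : ∀ α β, 0 ≤ (Wm * Ym) α β := by
    intro α β
    rw [Matrix.mul_apply]
    by_cases hα : ∃ l, ψ l = α
    · by_cases hβ : ∃ l, ψ l = β
      · have hterm : ∀ j, Wm α j * Ym j β =
            c hβ.choose.1 * (A21 hα.choose.1 j * D j hβ.choose.1) := by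
          intro j
          simp only [hWm, hYm, Matrix.of_apply, dif_pos hα, dif_pos hβ]; ring
        rw [Finset.sum_congr rfl fun j _ => hterm j, ← Finset.mul_sum]
        have h2 : ∑ j, A21 hα.choose.1 j * D j hβ.choose.1 =
            (A21 * D) hα.choose.1 hβ.choose.1 := (Matrix.mul_apply).symm
        rw [h2, hA22D]
        exact mul_nonneg (hc0 _) (hA22n _ _)
      · rw [Finset.sum_eq_zero fun j _ => by
          simp only [hYm, Matrix.of_apply]; rw [dif_neg hβ, mul_zero]]
    · rw [Finset.sum_eq_zero fun j _ => by
        simp only [hWm, Matrix.of_apply]; rw [dif_neg hα, zero_mul]]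
  -- factorizations
  have hfacA : Matrix.fromBlocks A11 A12 A21 A22 =
      Matrix.fromRows A11 A21 * Matrix.fromCols 1 D := by
    rw [Matrix.fromRows_mul_fromCols, Matrix.mul_one, Matrix.mul_one, hA12D, hA22D]
  have hBA : Matrix.fromCols (1 : Matrix (Fin m) (Fin m) ℝ) D * Matrix.fromRows A11 A21 = A11 + D * A21 := by
    rw [Matrix.fromCols_mul_fromRows, Matrix.one_mul]
  set Asum : Matrix (Fin m ⊕ Fin (m * r)) (Fin m ⊕ Fin (m * r)) ℝ :=
    Matrix.fromBlocks A11 (A11 * Ym) Wm (Wm * Ym) with hAsum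
  have hfacT : Asum = Matrix.fromRows A11 Wm * Matrix.fromCols 1 Ym := by
    rw [Matrix.fromRows_mul_fromCols, Matrix.mul_one, Matrix.mul_one, hAsum]
  have hBT : Matrix.fromCols (1 : Matrix (Fin m) (Fin m) ℝ) Ym * Matrix.fromRows A11 Wm = A11 + D * A21 := by
    rw [Matrix.fromCols_mul_fromRows, Matrix.one_mul, hYW]
  have key1 := charpoly_mul_comm_aux (Matrix.fromRows A11 A21) (Matrix.fromCols 1 D)
  have key2 := charpoly_mul_comm_aux (Matrix.fromRows A11 Wm) (Matrix.fromCols 1 Ym)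
  rw [← hfacA, hBA] at key1
  rw [← hfacT, hBT] at key2
  simp only [Fintype.card_sum, Fintype.card_fin] at key1 key2
  have hXm : (X : ℝ[X]) ^ m ≠ 0 := pow_ne_zero _ X_ne_zero
  have e1 : (Matrix.fromBlocks A11 A12 A21 A22).charpoly =
      (A11 + D * A21).charpoly * X ^ (n - m) := by
    apply mul_right_cancel₀ hXm
    rw [key1, pow_add]
    ring
  have e2 : Asum.charpoly = (A11 + D * A21).charpoly * X ^ (m * r) := by
    apply mul_right_cancel₀ hXm
    rw [key2, pow_add]
    ring
  refine ⟨Matrix.reindex finSumFinEquiv finSumFinEquiv Asum, ?_, ?_⟩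
  · intro i j
    rw [Matrix.reindex_apply, Matrix.submatrix_apply]
    have hAsum_nn : ∀ p q, 0 ≤ Asum p q := by
      intro p q
      rcases p with p | p <;> rcases q with q | q
      · simpa [hAsum] using hA11 p q
      · simpa [hAsum] using hA11Y p q
      · simpa [hAsum] using hWnn p q
      · simpa [hAsum] using hWY p q
    exact hAsum_nn _ _
  · have hxp : (X : ℝ[X]) ^ (n - m) = X ^ (n - (m + m * r)) * X ^ (m * r) := by
      rw [← pow_add]
      congr 1
      omega
    rw [Matrix.charpoly_reindex, e2, e1, hxp]
    ring
end

section
/- For 1 ≤ l ≤ k, let D_l be an l×l real diagonal matrix with all diagonal entries nonzero, and let A be the (2k−l)×(2k−l) block matrix diag(D_l, N) where N = [[0_{k−l}, I_{k−l}],[0, 0_{k−l}]]. Then A has rank k, exactly l nonzero eigenvalues, and no proper principal submatrix of A has rank k. -/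
open Matrix Polynomial

lemma aux_charpoly_diagonal {n : Type*} [DecidableEq n] [Fintype n] {R : Type*} [CommRing R]
    (d : n → R) : (Matrix.diagonal d).charpoly = ∏ i, (X - C (d i)) := by
  have h : charmatrix (Matrix.diagonal d) = Matrix.diagonal (fun i => X - C (d i)) := by
    ext i j
    by_cases hij : i = j
    · subst hij; simp [charmatrix_apply_eq, diagonal_apply_eq]
    · simp [charmatrix_apply_ne _ _ _ hij, diagonal_apply_ne _ hij]
  rw [Matrix.charpoly, h, det_diagonal]

lemma aux_charpoly_zero {n : Type*} [DecidableEq n] [Fintype n] {R : Type*} [CommRing R] :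
    (0 : Matrix n n R).charpoly = X ^ Fintype.card n := by
  rw [← Matrix.diagonal_zero, aux_charpoly_diagonal]
  simp [Finset.prod_const, Finset.card_univ]

theorem stmt_10 (k l : ℕ) (hl : 1 ≤ l) (hlk : l ≤ k)
    (D : Fin l → ℝ) (hD : ∀ i, D i ≠ 0)
    (A : Matrix (Fin l ⊕ (Fin (k - l) ⊕ Fin (k - l)))
                (Fin l ⊕ (Fin (k - l) ⊕ Fin (k - l))) ℝ)
    (hA : A = Matrix.fromBlocks (Matrix.diagonal D) 0 0
        (Matrix.fromBlocks 0 1 0 0)) :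
    A.rank = k ∧
    (∃ g : Polynomial ℝ, A.charpoly = X ^ (2 * k - l - l) * g ∧ g.eval 0 ≠ 0) ∧
    ∀ s : Finset (Fin l ⊕ (Fin (k - l) ⊕ Fin (k - l))), s ≠ Finset.univ →
      (A.submatrix (fun i : {x // x ∈ s} => (i : Fin l ⊕ (Fin (k - l) ⊕ Fin (k - l))))
        (fun j : {x // x ∈ s} => (j : Fin l ⊕ (Fin (k - l) ⊕ Fin (k - l))))).rank ≠ k := by
  refine ⟨?_, ?_, ?_⟩
  · -- rank A = k
    have hAAT : A * Aᵀ = Matrix.diagonal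
        (Sum.elim (fun i => D i * D i) (Sum.elim 1 0)) := by
      subst hA
      have hr : Matrix.diagonal ((Sum.elim (fun i => D i * D i)
            (Sum.elim 1 0)) : Fin l ⊕ (Fin (k-l) ⊕ Fin (k-l)) → ℝ)
          = fromBlocks (Matrix.diagonal fun i => D i * D i) 0 0
            (fromBlocks (Matrix.diagonal 1) 0 0 (Matrix.diagonal 0)) := by
        rw [← fromBlocks_diagonal, ← fromBlocks_diagonal]
      rw [hr]
      simp [fromBlocks_transpose, fromBlocks_multiply, diagonal_mul_diagonal,
        Matrix.diagonal_one, -Matrix.fromBlocks_diagonal]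
    have h1 : A.rank = (A * Aᵀ).rank := (Matrix.rank_self_mul_transpose A).symm
    rw [h1, hAAT, Matrix.rank_diagonal]
    set w : Fin l ⊕ (Fin (k-l) ⊕ Fin (k-l)) → ℝ :=
      Sum.elim (fun i => D i * D i) (Sum.elim 1 0) with hw
    have hwl : ∀ i, w (Sum.inl i) = D i * D i := fun _ => rfl
    have hwm : ∀ i, w (Sum.inr (Sum.inl i)) = 1 := fun _ => rfl
    have hwr : ∀ i, w (Sum.inr (Sum.inr i)) = 0 := fun _ => rfl
    have hb : Function.Bijective
        (fun x : {i // w i ≠ 0} => Sum.map id (Sum.elim id id) x.1 :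
          {i // w i ≠ 0} → Fin l ⊕ Fin (k - l)) := by
      constructor
      · rintro ⟨(i | i | i), hx⟩ ⟨(j | j | j), hy⟩ h <;>
          simp only [Sum.map, Sum.elim_inl, Sum.elim_inr, id] at h <;>
          first
            | (exact absurd (hwr _) hx)
            | (exact absurd (hwr _) hy)
            | (cases h; rfl)
            | cases h
      · rintro (i | i)
        · exact ⟨⟨Sum.inl i, by rw [hwl]; exact mul_ne_zero (hD i) (hD i)⟩, rfl⟩
        · exact ⟨⟨Sum.inr (Sum.inl i), by rw [hwm]; exact one_ne_zero⟩, rfl⟩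
    rw [Fintype.card_of_bijective hb]
    simp only [Fintype.card_sum, Fintype.card_fin]
    omega
  · -- charpoly
    refine ⟨∏ i, (X - C (D i)), ?_, ?_⟩
    · rw [hA, charpoly_fromBlocks_zero₂₁, charpoly_fromBlocks_zero₂₁,
        aux_charpoly_diagonal, aux_charpoly_zero]
      rw [Fintype.card_fin, ← pow_add]
      have h2 : k - l + (k - l) = 2 * k - l - l := by omega
      rw [h2, mul_comm]
    · simp only [eval_prod, eval_sub, eval_X, eval_C, zero_sub]
      exact Finset.prod_ne_zero_iff.2 fun i _ => neg_ne_zero.2 (hD i)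
  · -- principal submatrices
    have hAl : ∀ i w, A (Sum.inl i) w = if w = Sum.inl i then D i else 0 := by
      intro i w
      rcases w with j | j | j <;> simp [hA, Matrix.diagonal_apply, eq_comm]
    have hAm : ∀ i w, A (Sum.inr (Sum.inl i)) w =
        if w = Sum.inr (Sum.inr i) then 1 else 0 := by
      intro i w
      rcases w with j | j | j <;> simp [hA, Matrix.one_apply, eq_comm]
    have hAr : ∀ i w, A (Sum.inr (Sum.inr i)) w = 0 := by
      intro i w
      rcases w with j | j | j <;> simp [hA]
    have hoffd : ∀ x y, x ≠ y → ∀ z, A x z * A y z = 0 := by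
      intro x y hxy z
      rcases x with i | i | i <;> rcases y with j | j | j <;>
        simp only [hAl, hAm, hAr, mul_zero, zero_mul, ite_mul, mul_ite, one_mul, mul_one] <;>
        split_ifs <;> simp_all
    intro s hs
    set B := A.submatrix
        (fun i : {x // x ∈ s} => (i : Fin l ⊕ (Fin (k - l) ⊕ Fin (k - l))))
        (fun j : {x // x ∈ s} => (j : Fin l ⊕ (Fin (k - l) ⊕ Fin (k - l)))) with hB
    set v : {x // x ∈ s} → ℝ :=
      fun x => ∑ z : {y // y ∈ s}, A ↑x ↑z * A ↑x ↑z with hv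
    have hBB : B * Bᵀ = Matrix.diagonal v := by
      ext x y
      by_cases hxy : x = y
      · subst hxy
        simp [hB, hv, Matrix.mul_apply, Matrix.diagonal_apply_eq]
      · rw [Matrix.diagonal_apply_ne _ hxy]
        simp only [hB, Matrix.mul_apply, Matrix.transpose_apply, Matrix.submatrix_apply]
        exact Finset.sum_eq_zero fun z _ =>
          hoffd _ _ (fun h => hxy (Subtype.ext h)) _
    have hv1 : ∀ (x : {y // y ∈ s}) (i : Fin (k - l)),
        (x : Fin l ⊕ (Fin (k-l) ⊕ Fin (k-l))) = Sum.inr (Sum.inr i) → v x = 0 := by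
      intro x i hx
      rw [hv]
      exact Finset.sum_eq_zero fun z _ => by rw [hx, hAr, zero_mul]
    have hv2 : ∀ (x : {y // y ∈ s}) (i : Fin (k - l)),
        (x : Fin l ⊕ (Fin (k-l) ⊕ Fin (k-l))) = Sum.inr (Sum.inl i) →
        Sum.inr (Sum.inr i) ∉ s → v x = 0 := by
      intro x i hx hns
      rw [hv]
      refine Finset.sum_eq_zero fun z _ => ?_
      rw [hx, hAm]
      have : (z : Fin l ⊕ (Fin (k-l) ⊕ Fin (k-l))) ≠ Sum.inr (Sum.inr i) := by
        intro h; exact hns (h ▸ z.2)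
      rw [if_neg this, zero_mul]
    have hrank : B.rank = Fintype.card {x // v x ≠ 0} := by
      rw [← Matrix.rank_self_mul_transpose, hBB, Matrix.rank_diagonal]
    set φ : {x : {y // y ∈ s} // v x ≠ 0} → Fin l ⊕ Fin (k - l) :=
      fun x => Sum.map id (Sum.elim id id) (x : {y // y ∈ s}) with hφ
    have hinj : Function.Injective φ := by
      rintro ⟨⟨(i | i | i), hxs⟩, hxv⟩ ⟨⟨(j | j | j), hys⟩, hyv⟩ h <;>
        first
          | exact absurd (hv1 _ _ rfl) hxv
          | exact absurd (hv1 _ _ rfl) hyv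
          | (simp only [hφ, Sum.map, Sum.elim_inl, Sum.elim_inr, id] at h;
             first | (cases h; rfl) | cases h)
    have ha : ∃ a, a ∉ s := by
      by_contra h
      push_neg at h
      exact hs (Finset.eq_univ_iff_forall.2 h)
    obtain ⟨a, ha⟩ := ha
    have hnr : Sum.map id (Sum.elim id id) a ∉ Set.range φ := by
      rintro ⟨⟨⟨(i | i | i), hxs⟩, hxv⟩, h⟩ <;>
        rcases a with m | m | m <;>
        simp only [hφ, Sum.map, Sum.elim_inl, Sum.elim_inr, id] at h <;>
        first
          | exact absurd (hv1 _ _ rfl) hxv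
          | (cases h; exact ha hxs)
          | (cases h; exact absurd (hv2 _ _ rfl ha) hxv)
          | cases h
    have hcard : Fintype.card (Fin l ⊕ Fin (k - l)) = k := by
      simp only [Fintype.card_sum, Fintype.card_fin]
      omega
    have hlt : Fintype.card {x // v x ≠ 0} < k := by
      have h3 := Fintype.card_lt_of_injective_of_notMem φ hinj hnr
      omega
    omega
end

section
/- For t = 1, the matrix A(1) defined above has rank(A(1) + 2I) = 3 and rank((A(1) + 2I)²) = 2, so the Jordan canonical form of A(1) for the eigenvalue −2 consists of one Jordan block of size 2 and one of size 1 (minimal polynomial of degree 4). -/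
open Matrix Polynomial
set_option maxHeartbeats 1000000

noncomputable section AuxStmt18

def stmt18A (s : ℝ) : Matrix (Fin 5) (Fin 5) ℝ :=
  !![0,2,1/2,0,0; 2,0,1/2,0,0; 0,0,0,1,0; 0,0,4,0,2*s; 0,0,4*s,2*s,0]

def stmt18B (s : ℝ) : Matrix (Fin 5) (Fin 5) ℝ :=
  !![2,2,1/2,0,0; 2,2,1/2,0,0; 0,0,2,1,0; 0,0,4,2,2*s; 0,0,4*s,2*s,2]

def stmt18B2 (s : ℝ) : Matrix (Fin 5) (Fin 5) ℝ :=
  !![8,8,3,1/2,0; 8,8,3,1/2,0; 0,0,8,4,2*s; 0,0,32,16,8*s; 0,0,24*s,12*s,12]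

def stmt18A4 (s : ℝ) : Matrix (Fin 5) (Fin 5) ℝ :=
  !![-4,2,1/2,0,0; 2,-4,1/2,0,0; 0,0,-4,1,0; 0,0,4,-4,2*s; 0,0,4*s,2*s,-4]

def stmt18A2 (s : ℝ) : Matrix (Fin 5) (Fin 5) ℝ :=
  !![-2,2,1/2,0,0; 2,-2,1/2,0,0; 0,0,-2,1,0; 0,0,4,-2,2*s; 0,0,4*s,2*s,-2]

def stmt18P (s : ℝ) : Matrix (Fin 5) (Fin 5) ℝ :=
  !![12,-12,-2,1/2,0; -12,12,-2,1/2,0; 0,0,12,-6,2*s; 0,0,-8,20,-12*s; 0,0,-16*s,-8*s,16]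

lemma stmt18_hB2 (s : ℝ) (h2 : s ^ 2 = 2) : stmt18B s * stmt18B s = stmt18B2 s := by
  ext i j
  fin_cases i <;> fin_cases j <;>
    simp [stmt18B, stmt18B2, Matrix.mul_apply, Fin.sum_univ_five, Matrix.vecHead,
      Matrix.vecTail] <;>
    first
    | ring1
    | (ring_nf; norm_num [h2])

lemma stmt18_hP (s : ℝ) (h2 : s ^ 2 = 2) : stmt18A4 s * stmt18A2 s = stmt18P s := by
  ext i j
  fin_cases i <;> fin_cases j <;>
    simp [stmt18A4, stmt18A2, stmt18P, Matrix.mul_apply, Fin.sum_univ_five, Matrix.vecHead,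
      Matrix.vecTail] <;>
    first
    | ring1
    | (ring_nf; norm_num [h2])

lemma stmt18_hPB2 (s : ℝ) (h2 : s ^ 2 = 2) : stmt18P s * stmt18B2 s = 0 := by
  ext i j
  fin_cases i <;> fin_cases j <;>
    simp [stmt18P, stmt18B2, Matrix.mul_apply, Fin.sum_univ_five, Matrix.vecHead,
      Matrix.vecTail] <;>
    first
    | ring1
    | (ring_nf; norm_num [h2])
    | skip

lemma stmt18_fac1 (s : ℝ) (h2 : s ^ 2 = 2) :
    stmt18B s = (!![1,0,0;1,0,0;0,1,0;0,0,1;0,s,s/2] : Matrix (Fin 5) (Fin 3) ℝ) *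
      !![2,2,1/2,0,0;0,0,2,1,0;0,0,4,2,2*s] := by
  ext i j
  fin_cases i <;> fin_cases j <;>
    simp [stmt18B, Matrix.mul_apply, Fin.sum_univ_three, Matrix.vecHead, Matrix.vecTail] <;>
    first
    | ring1
    | (ring_nf; norm_num [h2])

lemma stmt18_fac2 (s : ℝ) (h2 : s ^ 2 = 2) :
    stmt18B2 s = (!![1,0;1,0;0,1;0,4;0,3*s] : Matrix (Fin 5) (Fin 2) ℝ) *
      !![8,8,3,1/2,0;0,0,8,4,2*s] := by
  ext i j
  fin_cases i <;> fin_cases j <;>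
    simp [stmt18B2, Matrix.mul_apply, Fin.sum_univ_two, Matrix.vecHead, Matrix.vecTail] <;>
    first
    | ring1
    | (ring_nf; norm_num [h2])

lemma stmt18_sub1 (s : ℝ) :
    (!![1,0,0,0,0;0,0,1,0,0;0,0,0,1,0] : Matrix (Fin 3) (Fin 5) ℝ) * stmt18B s *
      (!![1,0,0;0,0,0;0,0,0;0,1,0;0,0,1] : Matrix (Fin 5) (Fin 3) ℝ) =
      !![2,0,0;0,1,0;0,2,2*s] := by
  ext i j
  fin_cases i <;> fin_cases j <;>
    simp [stmt18B, Matrix.mul_apply, Fin.sum_univ_five, Fin.sum_univ_three, Matrix.vecHead,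
      Matrix.vecTail] <;>
    ring1

lemma stmt18_sub2 (s : ℝ) :
    (!![1,0,0,0,0;0,0,1,0,0] : Matrix (Fin 2) (Fin 5) ℝ) * stmt18B2 s *
      (!![1,0;0,0;0,1;0,0;0,0] : Matrix (Fin 5) (Fin 2) ℝ) =
      !![8,3;0,8] := by
  ext i j
  fin_cases i <;> fin_cases j <;>
    simp [stmt18B2, Matrix.mul_apply, Fin.sum_univ_five, Fin.sum_univ_two, Matrix.vecHead,
      Matrix.vecTail] <;>
    ring1

end AuxStmt18

theorem stmt_18 (A : Matrix (Fin 5) (Fin 5) ℝ)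
    (hA : A = !![0, 2, 1/2, 0, 0;
                 2, 0, 1/2, 0, 0;
                 256/((1:ℝ)^2+7) - 32, 256/((1:ℝ)^2+7) - 32, 0, 1, 0;
                 0, 0, ((1:ℝ)^4 + 78*1^2 - 15)/(2*(1^2+7)), 0, Real.sqrt (2*1^2+30)/2;
                 0, 0, 2*Real.sqrt 2*(3*(1:ℝ)^4 + 58*1^2 + 3)/((1^2+7)*Real.sqrt (1^2+15)),
                   Real.sqrt (2*(1:ℝ)^2+30)/2, 0]) :
    (A + (2 : ℝ) • 1).rank = 3 ∧ ((A + (2 : ℝ) • 1) ^ 2).rank = 2 ∧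
      (minpoly ℝ A).natDegree = 4 := by
  have h2 : Real.sqrt 2 ^ 2 = 2 := Real.sq_sqrt (by norm_num)
  set s := Real.sqrt 2 with hsdef
  have hs0 : (0:ℝ) < s := Real.sqrt_pos.mpr (by norm_num)
  have h16 : Real.sqrt 16 = 4 := by
    rw [show (16:ℝ) = 4^2 by norm_num, Real.sqrt_sq (by norm_num)]
  have h32 : Real.sqrt 32 = 4*s := by
    rw [show (32:ℝ) = 4^2*2 by norm_num, Real.sqrt_mul (by positivity), Real.sqrt_sq (by norm_num)]
  have hA0 : A = stmt18A s := by
    rw [hA]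
    ext i j
    fin_cases i <;> fin_cases j <;>
      simp [stmt18A, Matrix.vecHead, Matrix.vecTail] <;>
      norm_num [h16, h32] <;> ring1
  have hB : A + (2:ℝ) • 1 = stmt18B s := by
    rw [hA0]
    ext i j
    fin_cases i <;> fin_cases j <;>
      simp [stmt18A, stmt18B, Matrix.add_apply, Matrix.smul_apply, Matrix.one_apply, Matrix.vecHead, Matrix.vecTail]
  have hA4 : A - (4:ℝ) • 1 = stmt18A4 s := by
    rw [hA0]
    ext i j
    fin_cases i <;> fin_cases j <;>
      simp [stmt18A, stmt18A4, Matrix.sub_apply, Matrix.smul_apply, Matrix.one_apply, Matrix.vecHead, Matrix.vecTail]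
  have hA2 : A - (2:ℝ) • 1 = stmt18A2 s := by
    rw [hA0]
    ext i j
    fin_cases i <;> fin_cases j <;>
      simp [stmt18A, stmt18A2, Matrix.sub_apply, Matrix.smul_apply, Matrix.one_apply, Matrix.vecHead, Matrix.vecTail]
  have hBneg : A - (-2:ℝ) • 1 = stmt18B s := by
    rw [← hB]; rw [neg_smul, sub_neg_eq_add]
  -- rank statements
  have hrank1 : (A + (2:ℝ) • 1).rank = 3 := by
    rw [hB]
    refine le_antisymm ?_ ?_
    · rw [stmt18_fac1 s h2]
      exact (Matrix.rank_mul_le_left _ _).trans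
        ((Matrix.rank_le_card_width _).trans (by simp))
    · have hu : IsUnit (!![2,0,0;0,1,0;0,2,2*s] : Matrix (Fin 3) (Fin 3) ℝ).det := by
        rw [Matrix.det_fin_three]
        simp
        positivity
      have h3 : ((!![1,0,0,0,0;0,0,1,0,0;0,0,0,1,0] : Matrix (Fin 3) (Fin 5) ℝ) * stmt18B s *
          (!![1,0,0;0,0,0;0,0,0;0,1,0;0,0,1] : Matrix (Fin 5) (Fin 3) ℝ)).rank = 3 := by
        rw [stmt18_sub1 s, Matrix.rank_of_isUnit _ ((Matrix.isUnit_iff_isUnit_det _).mpr hu)]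
        simp
      calc (3:ℕ) = _ := h3.symm
        _ ≤ (stmt18B s * (!![1,0,0;0,0,0;0,0,0;0,1,0;0,0,1] : Matrix (Fin 5) (Fin 3) ℝ)).rank := by
            rw [Matrix.mul_assoc]; exact Matrix.rank_mul_le_right _ _
        _ ≤ (stmt18B s).rank := Matrix.rank_mul_le_left _ _
  have hrank2 : ((A + (2:ℝ) • 1)^2).rank = 2 := by
    rw [hB, pow_two, stmt18_hB2 s h2]
    refine le_antisymm ?_ ?_
    · rw [stmt18_fac2 s h2]
      exact (Matrix.rank_mul_le_left _ _).trans
        ((Matrix.rank_le_card_width _).trans (by simp))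
    · have hu : IsUnit (!![8,3;0,8] : Matrix (Fin 2) (Fin 2) ℝ).det := by
        rw [Matrix.det_fin_two]
        norm_num
      have h3 : ((!![1,0,0,0,0;0,0,1,0,0] : Matrix (Fin 2) (Fin 5) ℝ) * stmt18B2 s *
          (!![1,0;0,0;0,1;0,0;0,0] : Matrix (Fin 5) (Fin 2) ℝ)).rank = 2 := by
        rw [stmt18_sub2 s, Matrix.rank_of_isUnit _ ((Matrix.isUnit_iff_isUnit_det _).mpr hu)]
        simp
      calc (2:ℕ) = _ := h3.symm
        _ ≤ (stmt18B2 s * (!![1,0;0,0;0,1;0,0;0,0] : Matrix (Fin 5) (Fin 2) ℝ)).rank := by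
            rw [Matrix.mul_assoc]; exact Matrix.rank_mul_le_right _ _
        _ ≤ (stmt18B2 s).rank := Matrix.rank_mul_le_left _ _
  -- minimal polynomial
  set p4 : ℝ[X] := X - C 4 with hp4
  set p2 : ℝ[X] := X - C 2 with hp2
  set pm : ℝ[X] := X - C (-2) with hpm
  have haev : ∀ q : ℝ[X], aeval A q = 0 → ∀ r : ℝ[X], q ∣ r → aeval A r = 0 := by
    rintro q hq r ⟨c, rfl⟩
    rw [_root_.map_mul, hq, zero_mul]
  have hp0 : aeval A (p4 * p2 * pm^2) = 0 := by
    simp only [hp4, hp2, hpm, _root_.map_mul, _root_.map_pow, _root_.map_sub, aeval_X, aeval_C,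
      Algebra.algebraMap_eq_smul_one]
    rw [hA4, hA2, hBneg, stmt18_hP s h2, pow_two, stmt18_hB2 s h2, stmt18_hPB2 s h2]
  have hmono : (p4 * p2 * pm^2).Monic :=
    ((monic_X_sub_C _).mul (monic_X_sub_C _)).mul ((monic_X_sub_C _).pow 2)
  have hint : IsIntegral ℝ A := ⟨p4 * p2 * pm^2, hmono, hp0⟩
  set q : ℝ[X] := minpoly ℝ A with hq
  have hq0 : q ≠ 0 := minpoly.ne_zero hint
  have hqaev : aeval A q = 0 := minpoly.aeval ℝ A
  have hqdvd : q ∣ p4 * p2 * pm^2 := minpoly.dvd ℝ A hp0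
  -- nonvanishing facts
  have hA2B2 : aeval A (p2 * pm^2) ≠ 0 := by
    have : (aeval A (p2 * pm^2)) 0 2 = 4 := by
      simp only [hp2, hpm, _root_.map_mul, _root_.map_pow, _root_.map_sub, aeval_X, aeval_C,
        Algebra.algebraMap_eq_smul_one]
      rw [hA2, hBneg, pow_two, stmt18_hB2 s h2]
      simp [stmt18A2, stmt18B2, Matrix.mul_apply, Fin.sum_univ_five, Matrix.vecHead,
        Matrix.vecTail]
      ring
    intro h; rw [h] at this; simp at this
  have hA4B2 : aeval A (p4 * pm^2) ≠ 0 := by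
    have : (aeval A (p4 * pm^2)) 0 0 = -16 := by
      simp only [hp4, hpm, _root_.map_mul, _root_.map_pow, _root_.map_sub, aeval_X, aeval_C,
        Algebra.algebraMap_eq_smul_one]
      rw [hA4, hBneg, pow_two, stmt18_hB2 s h2]
      simp [stmt18A4, stmt18B2, Matrix.mul_apply, Fin.sum_univ_five, Matrix.vecHead,
        Matrix.vecTail]
      ring
    intro h; rw [h] at this; norm_num at this
  have hPne : aeval A (p4 * p2) ≠ 0 := by
    have : (aeval A (p4 * p2)) 0 0 = 12 := by
      simp only [hp4, hp2, _root_.map_mul, _root_.map_sub, aeval_X, aeval_C,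
        Algebra.algebraMap_eq_smul_one]
      rw [hA4, hA2, stmt18_hP s h2]
      simp [stmt18P]
    intro h; rw [h] at this; norm_num at this
  have hPBne : aeval A (p4 * p2 * pm) ≠ 0 := by
    have : (aeval A (p4 * p2 * pm)) 2 4 = -8*s := by
      simp only [hp4, hp2, hpm, _root_.map_mul, _root_.map_sub, aeval_X, aeval_C,
        Algebra.algebraMap_eq_smul_one]
      rw [hA4, hA2, hBneg, stmt18_hP s h2]
      simp [stmt18P, stmt18B, Matrix.mul_apply, Fin.sum_univ_five, Matrix.vecHead,
        Matrix.vecTail]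
      ring
    intro h
    rw [h, Matrix.zero_apply] at this
    nlinarith [hs0]
  -- divisibility of the three linear factors
  have d4 : p4 ∣ q := by
    by_contra hnd
    have cop : IsCoprime q p4 :=
      (((Polynomial.prime_X_sub_C (4:ℝ)).coprime_iff_not_dvd).mpr hnd).symm
    have h1 : q ∣ p4 * (p2 * pm^2) := by rwa [show p4 * (p2 * pm^2) = p4 * p2 * pm^2 by ring]
    exact hA2B2 (haev q hqaev _ (cop.dvd_of_dvd_mul_left h1))
  have d2 : p2 ∣ q := by
    by_contra hnd
    have cop : IsCoprime q p2 :=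
      (((Polynomial.prime_X_sub_C (2:ℝ)).coprime_iff_not_dvd).mpr hnd).symm
    have h1 : q ∣ p2 * (p4 * pm^2) := by rwa [show p2 * (p4 * pm^2) = p4 * p2 * pm^2 by ring]
    exact hA4B2 (haev q hqaev _ (cop.dvd_of_dvd_mul_left h1))
  have dm : pm ∣ q := by
    by_contra hnd
    have cop : IsCoprime q pm :=
      (((Polynomial.prime_X_sub_C (-2:ℝ)).coprime_iff_not_dvd).mpr hnd).symm
    have h1 : q ∣ pm * (pm * (p4 * p2)) := by
      rwa [show pm * (pm * (p4 * p2)) = p4 * p2 * pm^2 by ring]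
    exact hPne (haev q hqaev _ (cop.dvd_of_dvd_mul_left (cop.dvd_of_dvd_mul_left h1)))
  have cop42 : IsCoprime p4 p2 :=
    Polynomial.isCoprime_X_sub_C_of_isUnit_sub (by norm_num)
  have cop4m : IsCoprime p4 pm :=
    Polynomial.isCoprime_X_sub_C_of_isUnit_sub (by norm_num)
  have cop2m : IsCoprime p2 pm :=
    Polynomial.isCoprime_X_sub_C_of_isUnit_sub (by norm_num)
  have d3 : p4 * p2 * pm ∣ q := (cop4m.mul_left cop2m).mul_dvd (cop42.mul_dvd d4 d2) dm
  obtain ⟨c, hc⟩ := d3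
  have hc0 : c ≠ 0 := by rintro rfl; rw [mul_zero] at hc; exact hq0 hc
  have hprodne : p4 * p2 * pm ≠ 0 :=
    ((monic_X_sub_C _).mul (monic_X_sub_C _)).mul (monic_X_sub_C _) |>.ne_zero
  have hdeg3 : (p4 * p2 * pm).natDegree = 3 := by
    rw [hp4, hp2, hpm,
      Polynomial.Monic.natDegree_mul ((monic_X_sub_C _).mul (monic_X_sub_C _)) (monic_X_sub_C _),
      Polynomial.Monic.natDegree_mul (monic_X_sub_C _) (monic_X_sub_C _)]
    simp [natDegree_X_sub_C]
  have hcdeg : c.natDegree ≠ 0 := by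
    intro hdeg0
    obtain ⟨a, rfl⟩ := Polynomial.natDegree_eq_zero.mp hdeg0
    have hq' : a • aeval A (p4 * p2 * pm) = 0 := by
      have h' : aeval A (p4 * p2 * pm * C a) = 0 := by rw [← hc]; exact hqaev
      rwa [_root_.map_mul, aeval_C, Algebra.algebraMap_eq_smul_one, mul_smul_comm, mul_one] at h'
    rcases smul_eq_zero.mp hq' with h | h
    · apply hc0; rw [h, _root_.map_zero]
    · exact hPBne h
  have hdegq : q.natDegree = 3 + c.natDegree := by
    rw [hc, Polynomial.natDegree_mul hprodne hc0, hdeg3]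
  have hdegp : (p4 * p2 * pm ^ 2).natDegree = 4 := by
    rw [hp4, hp2, hpm,
      Polynomial.Monic.natDegree_mul ((monic_X_sub_C _).mul (monic_X_sub_C _))
        ((monic_X_sub_C _).pow 2),
      Polynomial.Monic.natDegree_mul (monic_X_sub_C _) (monic_X_sub_C _)]
    simp [natDegree_X_sub_C, Polynomial.natDegree_pow]
  have hle : q.natDegree ≤ 4 := hdegp ▸ Polynomial.natDegree_le_of_dvd hqdvd hmono.ne_zero
  exact ⟨hrank1, hrank2, by omega⟩
end

section
/- Let A be a real n×n matrix and suppose rank(A) equals the number of nonzero eigenvalues of A, both equal to k, with n ≥ 2k. If A has an invertible k×k principal submatrix A11 (after permutation in the leading position), then A11 itself has rank equal to rank(A), so the construction of Theorem 3 applies with m = k, yielding a nonnegative matrix of order at most k + k² with the same nonzero spectrum when A is nonnegative. -/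
open Matrix Polynomial Module

section helpers

variable {m l : Type*} [Fintype m] [Fintype l] [DecidableEq m] [DecidableEq l]

lemma my_eval_charpoly (M : Matrix m m ℝ) (x : ℝ) :
    (M.charpoly).eval x = (x • (1 : Matrix m m ℝ) - M).det := by
  rw [Matrix.charpoly, ← Polynomial.coe_evalRingHom, RingHom.map_det]
  congr 1
  ext i j
  by_cases h : i = j
  · subst h
    simp [charmatrix_apply, Matrix.one_apply]
  · simp [charmatrix_apply, Matrix.one_apply, h, Matrix.diagonal_apply_ne _ h]

lemma my_charpoly_flip (U : Matrix m l ℝ) (V : Matrix l m ℝ) :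
    X ^ (Fintype.card l) * (U * V).charpoly = X ^ (Fintype.card m) * (V * U).charpoly := by
  apply Polynomial.eq_of_infinite_eval_eq
  apply Set.Infinite.mono (s := ({0}ᶜ : Set ℝ))
  swap
  · exact Set.Finite.infinite_compl (Set.finite_singleton 0)
  intro x hx
  have hx0 : (x : ℝ) ≠ 0 := hx
  simp only [Set.mem_setOf_eq, eval_mul, eval_pow, eval_X, my_eval_charpoly]
  have e1 : x • (1 : Matrix m m ℝ) - U * V
      = x • ((1 : Matrix m m ℝ) + (-(x⁻¹ • U)) * V) := by
    have hn : (-(x⁻¹ • U)) * V = -(x⁻¹ • (U * V)) := by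
      rw [Matrix.neg_mul, Matrix.smul_mul]
    rw [smul_add, hn, smul_neg, smul_smul, mul_inv_cancel₀ hx0, one_smul, ← sub_eq_add_neg]
  have e2 : x • (1 : Matrix l l ℝ) - V * U
      = x • ((1 : Matrix l l ℝ) + V * (-(x⁻¹ • U))) := by
    have hn : V * (-(x⁻¹ • U)) = -(x⁻¹ • (V * U)) := by
      rw [Matrix.mul_neg, Matrix.mul_smul]
    rw [smul_add, hn, smul_neg, smul_smul, mul_inv_cancel₀ hx0, one_smul, ← sub_eq_add_neg]
  rw [e1, e2, Matrix.det_smul, Matrix.det_smul, Matrix.det_one_add_mul_comm]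
  ring

lemma my_carath {ι V : Type*} [Fintype ι] [DecidableEq ι] [AddCommGroup V] [Module ℝ V]
    [FiniteDimensional ℝ V] (w : ι → V) :
    ∀ (N : ℕ) (J : Finset ι) (c : ι → ℝ), J.card ≤ N → (∀ i ∈ J, 0 ≤ c i) →
    ∃ (J' : Finset ι) (d : ι → ℝ), J'.card ≤ finrank ℝ V ∧ (∀ i ∈ J', 0 ≤ d i) ∧
      ∑ i ∈ J', d i • w i = ∑ i ∈ J, c i • w i := by
  intro N
  induction N with
  | zero =>
    intro J c hcard hc
    exact ⟨J, c, by omega, hc, rfl⟩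
  | succ N ih =>
    intro J c hcard hc
    by_cases hle : J.card ≤ finrank ℝ V
    · exact ⟨J, c, hle, hc, rfl⟩
    · have hdep : ¬ LinearIndependent ℝ (fun i : J => w ↑i) := by
        intro h
        have := h.fintype_card_le_finrank
        rw [Fintype.card_coe] at this
        omega
      obtain ⟨g, hg, i0, hgi0⟩ := Fintype.not_linearIndependent_iff.mp hdep
      classical
      set e : ι → ℝ := fun i => if h : i ∈ J then g ⟨i, h⟩ else 0 with he_def
      have he : ∑ i ∈ J, e i • w i = 0 := by
        rw [← Finset.sum_coe_sort J (fun i => e i • w i), ← hg]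
        apply Finset.sum_congr rfl
        intro i _
        have : e ↑i = g i := by rw [he_def]; simp
        rw [this]
      have hei0 : e ↑i0 ≠ 0 := by
        have : e ↑i0 = g i0 := by rw [he_def]; simp
        rw [this]; exact hgi0
      have main : ∀ u : ι → ℝ, (∑ i ∈ J, u i • w i = 0) → 0 < u ↑i0 →
          ∃ (J' : Finset ι) (d : ι → ℝ), J'.card ≤ finrank ℝ V ∧ (∀ i ∈ J', 0 ≤ d i) ∧
            ∑ i ∈ J', d i • w i = ∑ i ∈ J, c i • w i := by
        intro u husum hu0
        set T := J.filter (fun i => 0 < u i) with hT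
        have hi0T : (i0 : ι) ∈ T := Finset.mem_filter.mpr ⟨i0.2, hu0⟩
        obtain ⟨i1, hi1, hmin⟩ := T.exists_min_image (fun i => c i / u i) ⟨_, hi0T⟩
        have hi1J : i1 ∈ J := (Finset.mem_filter.mp hi1).1
        have hu1 : 0 < u i1 := (Finset.mem_filter.mp hi1).2
        set t := c i1 / u i1 with ht_def
        have ht : 0 ≤ t := div_nonneg (hc _ hi1J) hu1.le
        set c' : ι → ℝ := fun i => c i - t * u i with hc'_def
        have hc' : ∀ i ∈ J, 0 ≤ c' i := by
          intro i hi
          rw [hc'_def]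
          by_cases h : 0 < u i
          · have h1 : t ≤ c i / u i := hmin i (Finset.mem_filter.mpr ⟨hi, h⟩)
            have h2 : t * u i ≤ c i := (le_div_iff₀ h).mp h1
            simpa using sub_nonneg.mpr h2
          · push_neg at h
            have := hc i hi
            simp only
            nlinarith
        have hc'i1 : c' i1 = 0 := by
          rw [hc'_def]
          simp only [ht_def]
          rw [div_mul_cancel₀ _ hu1.ne']
          ring
        have hsum2 : ∑ i ∈ J, c' i • w i = ∑ i ∈ J, c i • w i := by
          simp only [hc'_def, sub_smul, Finset.sum_sub_distrib, mul_smul]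
          rw [← Finset.smul_sum, husum, smul_zero, sub_zero]
        have hsum3 : ∑ i ∈ J.erase i1, c' i • w i = ∑ i ∈ J, c i • w i := by
          rw [Finset.sum_erase _ (by rw [hc'i1, zero_smul]), hsum2]
        have hcard' : (J.erase i1).card ≤ N := by
          rw [Finset.card_erase_of_mem hi1J]
          omega
        obtain ⟨J', d, h1, h2, h3⟩ := ih (J.erase i1) c' hcard'
          (fun i hi => hc' i (Finset.mem_of_mem_erase hi))
        exact ⟨J', d, h1, h2, by rw [h3, hsum3]⟩
      rcases hei0.lt_or_gt with hneg | hpos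
      · refine main (-e) ?_ (by simpa using hneg)
        simp only [Pi.neg_apply, neg_smul, Finset.sum_neg_distrib, he, neg_zero]
      · exact main e he hpos

lemma my_S_zero (B : Matrix m m ℝ) (S : Matrix l l ℝ) (hB : IsUnit B.det)
    (h : (fromBlocks B (0 : Matrix m l ℝ) (0 : Matrix l m ℝ) S).rank = Fintype.card m) :
    S = 0 := by
  by_contra hS
  obtain ⟨i, j, hij⟩ : ∃ i j, S i j ≠ 0 := by
    by_contra h'
    push_neg at h'
    exact hS (by ext i j; simpa using h' i j)
  classical
  set v : l → ℝ := S *ᵥ Pi.single j 1 with hv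
  have hvne : v ≠ 0 := by
    intro h0
    apply hij
    have h1 : v i = 0 := by rw [h0]; rfl
    rw [hv, Matrix.mulVec_single] at h1
    simpa using h1
  set Φ := (fromBlocks B (0 : Matrix m l ℝ) (0 : Matrix l m ℝ) S).mulVecLin with hΦ
  set f1 : (m → ℝ) →ₗ[ℝ] (m ⊕ l → ℝ) :=
    { toFun := fun g => Sum.elim g 0
      map_add' := by intros a b; funext x; cases x <;> simp
      map_smul' := by intros a b; funext x; cases x <;> simp } with hf1
  have hf1inj : Function.Injective f1 := by
    intro a b hab
    funext i
    exact congrFun hab (Sum.inl i)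
  have hmem1 : ∀ g : m → ℝ, f1 g ∈ LinearMap.range Φ := by
    intro g
    refine ⟨Sum.elim (B⁻¹ *ᵥ g) 0, ?_⟩
    show (fromBlocks B (0 : Matrix m l ℝ) (0 : Matrix l m ℝ) S) *ᵥ _ = Sum.elim g 0
    rw [fromBlocks_mulVec]
    simp [Matrix.mulVec_mulVec, Matrix.mul_nonsing_inv _ hB]
  have hmem2 : Sum.elim (0 : m → ℝ) v ∈ LinearMap.range Φ := by
    have hpre : Φ (Sum.elim (0 : m → ℝ) (Pi.single j (1 : ℝ))) = Sum.elim (0 : m → ℝ) v := by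
      show (fromBlocks B (0 : Matrix m l ℝ) (0 : Matrix l m ℝ) S) *ᵥ
        (Sum.elim (0 : m → ℝ) (Pi.single j (1 : ℝ))) = Sum.elim (0 : m → ℝ) v
      rw [fromBlocks_mulVec]
      funext x
      rcases x with x | x <;>
        simp [hv, Function.comp_def, Pi.single_apply, Matrix.mulVec, dotProduct]
    exact ⟨_, hpre⟩
  have hnot : Sum.elim (0 : m → ℝ) v ∉ LinearMap.range f1 := by
    rintro ⟨g, hg⟩
    apply hvne
    funext x
    have := congrFun hg (Sum.inr x)
    simpa [hf1] using this.symm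
  have hle : LinearMap.range f1 ⊔ Submodule.span ℝ {Sum.elim (0 : m → ℝ) v}
      ≤ LinearMap.range Φ := by
    refine sup_le ?_ ?_
    · rintro x ⟨g, rfl⟩
      exact hmem1 g
    · rw [Submodule.span_le, Set.singleton_subset_iff]
      exact hmem2
  have hlt : LinearMap.range f1 < LinearMap.range f1 ⊔ Submodule.span ℝ {Sum.elim (0 : m → ℝ) v} := by
    refine lt_of_le_of_ne le_sup_left (fun hEq => hnot ?_)
    rw [hEq]
    exact Submodule.mem_sup_right (Submodule.mem_span_singleton_self _)
  have h1 : finrank ℝ (LinearMap.range f1) = Fintype.card m := by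
    rw [LinearMap.finrank_range_of_inj hf1inj, Module.finrank_fintype_fun_eq_card]
  have h2 := Submodule.finrank_lt_finrank_of_lt hlt
  have h3 := Submodule.finrank_mono hle
  have hr : finrank ℝ (LinearMap.range Φ) = Fintype.card m := h
  omega

lemma my_aux {p q : Type*} [Fintype p] [DecidableEq p] [Fintype q] [DecidableEq q]
    (A11 : Matrix p p ℝ) (A12 : Matrix p q ℝ) (A21 : Matrix q p ℝ) (A22 : Matrix q q ℝ)
    (h11 : ∀ i j, 0 ≤ A11 i j) (h12 : ∀ i j, 0 ≤ A12 i j) (h21 : ∀ i j, 0 ≤ A21 i j)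
    (h22 : ∀ i j, 0 ≤ A22 i j)
    (hinv : IsUnit A11.det)
    (hrank : (fromBlocks A11 A12 A21 A22).rank = Fintype.card p) :
    ∃ ntil : ℕ, ntil ≤ Fintype.card p + Fintype.card p ^ 2 ∧
      ntil ≤ Fintype.card p + Fintype.card q ∧
      ∃ Atil : Matrix (Fin ntil) (Fin ntil) ℝ, (∀ i j, 0 ≤ Atil i j) ∧
        (fromBlocks A11 A12 A21 A22).charpoly
          = X ^ (Fintype.card p + Fintype.card q - ntil) * Atil.charpoly := by
  classical
  have hi : Invertible A11 := A11.invertibleOfIsUnitDet hinv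
  -- Schur complement is zero
  have hdecomp := Matrix.fromBlocks_eq_of_invertible₁₁ A11 A12 A21 A22
  simp only [Matrix.invOf_eq_nonsing_inv] at hdecomp
  have hdetL : (fromBlocks (1 : Matrix p p ℝ) (0 : Matrix p q ℝ)
      (A21 * A11⁻¹) (1 : Matrix q q ℝ)).det = 1 := by
    rw [Matrix.det_fromBlocks_zero₁₂, Matrix.det_one, Matrix.det_one, one_mul]
  have hdetR : (fromBlocks (1 : Matrix p p ℝ) (A11⁻¹ * A12)
      (0 : Matrix q p ℝ) (1 : Matrix q q ℝ)).det = 1 := by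
    rw [Matrix.det_fromBlocks_zero₂₁, Matrix.det_one, Matrix.det_one, one_mul]
  have hrankD : (fromBlocks A11 (0 : Matrix p q ℝ) (0 : Matrix q p ℝ)
      (A22 - A21 * A11⁻¹ * A12)).rank = Fintype.card p := by
    rw [← hrank, hdecomp,
      Matrix.rank_mul_eq_left_of_isUnit_det _ _ (by rw [hdetR]; exact isUnit_one),
      Matrix.rank_mul_eq_right_of_isUnit_det _ _ (by rw [hdetL]; exact isUnit_one)]
  have hA22 : A22 = A21 * A11⁻¹ * A12 := by
    have := my_S_zero A11 _ hinv hrankD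
    rwa [sub_eq_zero] at this
  -- Caratheodory
  set w : q → (p × p → ℝ) := fun b z => A12 z.1 b * A21 b z.2 with hw
  obtain ⟨J, d, hJcard, hd0, hdsum⟩ := my_carath w (Finset.univ : Finset q).card
    Finset.univ (fun _ => 1) le_rfl (fun _ _ => zero_le_one)
  have hJk : J.card ≤ Fintype.card p ^ 2 := by
    have : finrank ℝ (p × p → ℝ) = Fintype.card p ^ 2 := by
      rw [Module.finrank_fintype_fun_eq_card, Fintype.card_prod, pow_two]
    omega
  have hJq : J.card ≤ Fintype.card q := by
    simpa using Finset.card_le_card (Finset.subset_univ J)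
  -- the compressed matrix
  set Bm : Matrix p {x // x ∈ J} ℝ := Matrix.of (fun i j => d ↑j * A12 i ↑j) with hBm
  set Cm : Matrix {x // x ∈ J} p ℝ := Matrix.of (fun j i => A21 ↑j i) with hCm
  have hBC : Bm * Cm = A12 * A21 := by
    ext i i'
    have h1 := congrFun hdsum (i, i')
    simp only [Finset.sum_apply, Pi.smul_apply, smul_eq_mul, hw, one_mul] at h1
    rw [Matrix.mul_apply, Matrix.mul_apply]
    calc ∑ j : {x // x ∈ J}, Bm i j * Cm j i'
        = ∑ b ∈ J, d b * A12 i b * A21 b i' := by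
          rw [← Finset.sum_coe_sort J (fun b => d b * A12 i b * A21 b i')]
          apply Finset.sum_congr rfl
          intro b _
          rw [hBm, hCm]
          simp [mul_assoc]
      _ = ∑ b : q, A12 i b * A21 b i' := by
          rw [← h1]
          apply Finset.sum_congr rfl
          intro b _
          ring
  have hCB : Cm * A11⁻¹ * Bm = Matrix.of (fun j j' : {x // x ∈ J} => d ↑j' * A22 ↑j ↑j') := by
    rw [hA22]
    ext j j'
    simp only [Matrix.mul_apply, Matrix.of_apply, hBm, hCm]
    rw [Finset.mul_sum]
    apply Finset.sum_congr rfl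
    intro a' _
    ring
  set K := A11 + A12 * A21 * A11⁻¹ with hK
  -- big flip
  have hUV : (fromRows (1 : Matrix p p ℝ) (A21 * A11⁻¹)) * (fromCols A11 A12)
      = fromBlocks A11 A12 A21 A22 := by
    rw [fromRows_mul_fromCols, Matrix.one_mul, Matrix.one_mul,
      Matrix.nonsing_inv_mul_cancel_right _ _ hinv, ← hA22]
  have hVU : (fromCols A11 A12) * (fromRows (1 : Matrix p p ℝ) (A21 * A11⁻¹)) = K := by
    rw [fromCols_mul_fromRows, Matrix.mul_one, hK, ← Matrix.mul_assoc]
  have h1 := my_charpoly_flip (fromRows (1 : Matrix p p ℝ) (A21 * A11⁻¹)) (fromCols A11 A12)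
  rw [hUV, hVU] at h1
  -- small flip
  set Atl := fromBlocks A11 Bm Cm (Cm * A11⁻¹ * Bm) with hAtl
  have hUV2 : (fromRows (1 : Matrix p p ℝ) (Cm * A11⁻¹)) * (fromCols A11 Bm) = Atl := by
    rw [fromRows_mul_fromCols, Matrix.one_mul, Matrix.one_mul,
      Matrix.nonsing_inv_mul_cancel_right _ _ hinv, hAtl]
  have hVU2 : (fromCols A11 Bm) * (fromRows (1 : Matrix p p ℝ) (Cm * A11⁻¹)) = K := by
    rw [fromCols_mul_fromRows, Matrix.mul_one, hK, ← Matrix.mul_assoc, hBC]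
  have h2 := my_charpoly_flip (fromRows (1 : Matrix p p ℝ) (Cm * A11⁻¹)) (fromCols A11 Bm)
  rw [hUV2, hVU2] at h2
  -- cancel powers of X
  have hXne : (X : ℝ[X]) ^ (Fintype.card p) ≠ 0 := pow_ne_zero _ Polynomial.X_ne_zero
  have hcardpq : Fintype.card (p ⊕ q) = Fintype.card p + Fintype.card q := Fintype.card_sum
  have hcardpγ : Fintype.card (p ⊕ {x // x ∈ J}) = Fintype.card p + J.card := by
    rw [Fintype.card_sum, Fintype.card_coe]
  have hcharA : (fromBlocks A11 A12 A21 A22).charpoly = X ^ (Fintype.card q) * K.charpoly := by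
    apply mul_left_cancel₀ hXne
    rw [h1, hcardpq, pow_add, mul_assoc]
  have hcharAtl : Atl.charpoly = X ^ J.card * K.charpoly := by
    apply mul_left_cancel₀ hXne
    rw [h2, hcardpγ, pow_add, mul_assoc]
  -- assemble
  refine ⟨Fintype.card p + J.card, by omega, by omega, ?_⟩
  have hcard2 : Fintype.card (p ⊕ {x // x ∈ J}) = Fintype.card p + J.card := hcardpγ
  let e2 : (p ⊕ {x // x ∈ J}) ≃ Fin (Fintype.card p + J.card) :=
    Fintype.equivFinOfCardEq hcard2
  refine ⟨Matrix.reindex e2 e2 Atl, ?_, ?_⟩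
  · intro i' j'
    rw [Matrix.reindex_apply, Matrix.submatrix_apply]
    generalize e2.symm i' = i
    generalize e2.symm j' = j
    rcases i with i | i <;> rcases j with j | j <;> rw [hAtl]
    · exact h11 i j
    · rw [hBm]
      exact mul_nonneg (hd0 _ j.2) (h12 _ _)
    · rw [hCm]
      exact h21 _ _
    · rw [hCB]
      exact mul_nonneg (hd0 _ j.2) (h22 _ _)
  · rw [Matrix.charpoly_reindex, hcharAtl, hcharA, ← mul_assoc, ← pow_add]
    congr 2
    omega

end helpers

theorem stmt_19 (n k : ℕ) (A : Matrix (Fin n) (Fin n) ℝ)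
    (hnonneg : ∀ i j, 0 ≤ A i j)
    (hk : A.rank = k)
    (hl : ∃ g : Polynomial ℝ, A.charpoly = X ^ (n - k) * g ∧ g.eval 0 ≠ 0)
    (hn : n ≥ 2 * k)
    (s : Finset (Fin n)) (hs : s.card = k)
    (hinv : IsUnit (A.submatrix (fun i : {x // x ∈ s} => (i : Fin n))
      (fun j : {x // x ∈ s} => (j : Fin n))).det) :
    (A.submatrix (fun i : {x // x ∈ s} => (i : Fin n))
        (fun j : {x // x ∈ s} => (j : Fin n))).rank = A.rank ∧
    ∃ ntil : ℕ, ntil ≤ k + k ^ 2 ∧ ntil ≤ n ∧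
      ∃ Atil : Matrix (Fin ntil) (Fin ntil) ℝ,
        (∀ i j, 0 ≤ Atil i j) ∧
        A.charpoly = X ^ (n - ntil) * Atil.charpoly := by
  classical
  have hcardα : Fintype.card {x // x ∈ s} = k := by
    rw [Fintype.card_coe, hs]
  have hcardβ : Fintype.card {x // ¬ x ∈ s} = n - k := by
    rw [Fintype.card_subtype_compl, Fintype.card_fin, hcardα]
  have hkn : k ≤ n := by omega
  constructor
  · rw [Matrix.rank_of_isUnit _ ((Matrix.isUnit_iff_isUnit_det _).mpr hinv), hk, hcardα]
  · set e : {x // x ∈ s} ⊕ {x // ¬ x ∈ s} ≃ Fin n := Equiv.sumCompl (fun x => x ∈ s) with he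
    have hsub : A.submatrix e e = fromBlocks
        (A.submatrix (fun i : {x // x ∈ s} => (i : Fin n)) (fun j : {x // x ∈ s} => (j : Fin n)))
        (A.submatrix (fun i : {x // x ∈ s} => (i : Fin n)) (fun j : {x // ¬ x ∈ s} => (j : Fin n)))
        (A.submatrix (fun i : {x // ¬ x ∈ s} => (i : Fin n)) (fun j : {x // x ∈ s} => (j : Fin n)))
        (A.submatrix (fun i : {x // ¬ x ∈ s} => (i : Fin n))
          (fun j : {x // ¬ x ∈ s} => (j : Fin n))) := by
      ext i j
      rcases i with i | i <;> rcases j with j | j <;> rfl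
    have hrankblocks : (fromBlocks
        (A.submatrix (fun i : {x // x ∈ s} => (i : Fin n)) (fun j : {x // x ∈ s} => (j : Fin n)))
        (A.submatrix (fun i : {x // x ∈ s} => (i : Fin n)) (fun j : {x // ¬ x ∈ s} => (j : Fin n)))
        (A.submatrix (fun i : {x // ¬ x ∈ s} => (i : Fin n)) (fun j : {x // x ∈ s} => (j : Fin n)))
        (A.submatrix (fun i : {x // ¬ x ∈ s} => (i : Fin n))
          (fun j : {x // ¬ x ∈ s} => (j : Fin n)))).rank = Fintype.card {x // x ∈ s} := by
      rw [← hsub, Matrix.rank_submatrix, hk, hcardα]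
    obtain ⟨ntil, hb1, hb2, Atil, hpos, hcharp⟩ := my_aux
      (A.submatrix (fun i : {x // x ∈ s} => (i : Fin n)) (fun j : {x // x ∈ s} => (j : Fin n)))
      (A.submatrix (fun i : {x // x ∈ s} => (i : Fin n)) (fun j : {x // ¬ x ∈ s} => (j : Fin n)))
      (A.submatrix (fun i : {x // ¬ x ∈ s} => (i : Fin n)) (fun j : {x // x ∈ s} => (j : Fin n)))
      (A.submatrix (fun i : {x // ¬ x ∈ s} => (i : Fin n)) (fun j : {x // ¬ x ∈ s} => (j : Fin n)))
      (fun i j => hnonneg _ _) (fun i j => hnonneg _ _) (fun i j => hnonneg _ _)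
      (fun i j => hnonneg _ _) hinv hrankblocks
    refine ⟨ntil, ?_, ?_, Atil, hpos, ?_⟩
    · rw [hcardα] at hb1; exact hb1
    · rw [hcardα, hcardβ] at hb2; omega
    · have hcharA : A.charpoly = (A.submatrix e e).charpoly := by
        have : A.submatrix e e = Matrix.reindex e.symm e.symm A := by
          rw [Matrix.reindex_apply, Equiv.symm_symm]
        rw [this, Matrix.charpoly_reindex]
      rw [hcharA, hsub, hcharp, hcardα, hcardβ]
      congr 2
      omega
end
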